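/- For ξ ∈ ℝ and n ≥ 2, let M₁(ξ) be the n×n symmetric matrix with (1,1) entry ξ and all other entries 1/((i + j − 1)(i + j)). Then the unique real root ξ₀ of the equation det M₁(ξ₀) = 0 equals 1/3 for n = 2, 5/12 for n = 3, 9/20 for n = 4, 7/15 for n = 5, 10/21 for n = 6, and 27/56 for n = 7. -/

import Mathlib

/-!
Since only the `(1,1)` entry depends on `ξ`, Laplace expansion along the first row makes
`det M₁(ξ)` affine in `ξ`, with slope the determinant of the trailing minor. That minor has
entries `1/((i+j+3)(i+j+4)) = ∫₀¹ x^(i+j) · x²(1-x) dx`, so it is the Hankel moment matrix of a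
weight positive on `(0,1)`, hence positive definite. The slope is therefore nonzero and
`det M₁` has exactly one real root, which is certified by a nonzero kernel vector of `M₁(ξ₀)`.
-/

open Matrix

/-- `M₁(ξ)` is the `n×n` matrix whose `(1,1)` entry is `ξ` and whose other entries are
`1/((i+j−1)(i+j))`. -/
noncomputable def M1 (n : ℕ) (ξ : ℝ) : Matrix (Fin n) (Fin n) ℝ :=
  Matrix.of fun i j : Fin n =>
    if i.val = 0 ∧ j.val = 0 then ξ
    else (1 : ℝ) / (((i.val + j.val + 1 : ℕ) : ℝ) * ((i.val + j.val + 2 : ℕ) : ℝ))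

open Polynomial Set

theorem Matrix.det_add_single_zero_zero {R : Type*} [CommRing R] {n : ℕ}
    (A : Matrix (Fin (n + 1)) (Fin (n + 1)) R) (c : R) :
    (A + single 0 0 c).det = A.det + c * (A.submatrix Fin.succ Fin.succ).det := by
  have hrows (f : Fin n → Fin (n + 1)) :
      (A + single 0 0 c).submatrix Fin.succ f = A.submatrix Fin.succ f := by
    ext i j
    simp [single_apply_of_row_ne (Fin.succ_ne_zero i).symm]
  rw [det_succ_row_zero, det_succ_row_zero A, Fin.sum_univ_succ, Fin.sum_univ_succ]
  simp only [hrows, add_apply, single_apply_same, Fin.succAbove_zero, Fin.val_zero, pow_zero,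
    single_apply_of_col_ne _ _ (Fin.succ_ne_zero _).symm, add_zero]
  ring

noncomputable def momentMatrix (w : ℝ → ℝ) (a b : ℝ) (n : ℕ) : Matrix (Fin n) (Fin n) ℝ :=
  of fun i j => ∫ x in a..b, x ^ (i + j : ℕ) * w x

lemma momentMatrix_isHermitian (w : ℝ → ℝ) (a b : ℝ) (n : ℕ) :
    (momentMatrix w a b n).IsHermitian := by
  ext i j
  simp [momentMatrix, add_comm]

lemma dotProduct_momentMatrix_mulVec {w : ℝ → ℝ} {a b : ℝ} (hab : a ≤ b)
    (hw : ContinuousOn w (Icc a b)) {n : ℕ} (v : Fin n → ℝ) :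
    v ⬝ᵥ (momentMatrix w a b n *ᵥ v) = ∫ x in a..b, (∑ i, v i * x ^ (i : ℕ)) ^ 2 * w x := by
  have hcont (i j : Fin n) :
      ContinuousOn (fun x => v i * v j * (x ^ (i + j : ℕ) * w x)) (Icc a b) :=
    continuousOn_const.mul ((continuousOn_pow _).mul hw)
  calc v ⬝ᵥ (momentMatrix w a b n *ᵥ v)
      = ∑ i, ∑ j, ∫ x in a..b, v i * v j * (x ^ (i + j : ℕ) * w x) := by
        simp only [dotProduct, mulVec, momentMatrix, of_apply, Finset.mul_sum,
          intervalIntegral.integral_const_mul]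
        exact Finset.sum_congr rfl fun i _ => Finset.sum_congr rfl fun j _ => by ring
    _ = ∫ x in a..b, ∑ i, ∑ j, v i * v j * (x ^ (i + j : ℕ) * w x) := by
        rw [intervalIntegral.integral_finsetSum fun i _ =>
          (continuousOn_finsetSum _ fun j _ => hcont i j).intervalIntegrable_of_Icc hab]
        simp only [intervalIntegral.integral_finsetSum fun j _ =>
          (hcont _ j).intervalIntegrable_of_Icc hab]
    _ = ∫ x in a..b, (∑ i, v i * x ^ (i : ℕ)) ^ 2 * w x := by
        refine intervalIntegral.integral_congr fun x _ => ?_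
        rw [sq, Finset.sum_mul_sum, Finset.sum_mul]
        exact Finset.sum_congr rfl fun i _ => by
          rw [Finset.sum_mul]
          exact Finset.sum_congr rfl fun j _ => by ring

theorem momentMatrix_posDef {w : ℝ → ℝ} {a b : ℝ} (hab : a < b)
    (hw : ContinuousOn w (Icc a b)) (hw_nonneg : ∀ x ∈ Icc a b, 0 ≤ w x)
    (hw_pos : ∀ x ∈ Ioo a b, 0 < w x) (n : ℕ) : (momentMatrix w a b n).PosDef := by
  refine .of_dotProduct_mulVec_pos (momentMatrix_isHermitian w a b n) fun v hv => ?_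
  rw [star_trivial, dotProduct_momentMatrix_mulVec hab.le hw]
  set p : ℝ[X] := ∑ i, C (v i) * X ^ (i : ℕ)
  have hp_eval (x : ℝ) : p.eval x = ∑ i, v i * x ^ (i : ℕ) := by simp [p, eval_finsetSum]
  have hp : p ≠ 0 := by
    intro h
    apply hv; ext k
    have := congrArg (coeff · k) h
    simpa [p, finsetSum_coeff, coeff_C_mul_X_pow, Fin.val_inj] using this
  obtain ⟨c, hc, hpc⟩ : ∃ c ∈ Ioo a b, c ∉ p.roots.toFinset :=
    ((Ioo_infinite hab).sdiff p.roots.toFinset.finite_toSet).nonempty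
  simp only [← hp_eval]
  refine intervalIntegral.integral_pos hab ?_ ?_ ⟨c, Ioo_subset_Icc_self hc, ?_⟩
  · exact (p.continuous.pow 2).continuousOn.mul hw
  · exact fun x hx => mul_nonneg (sq_nonneg _) (hw_nonneg x (Ioc_subset_Icc_self hx))
  · have : p.eval c ≠ 0 := by simpa [hp] using hpc
    exact mul_pos (by positivity) (hw_pos c hc)

lemma integral_pow_mul_sq_mul_one_sub (m : ℕ) :
    ∫ x in (0 : ℝ)..1, x ^ m * (x ^ 2 * (1 - x)) = 1 / (((m : ℝ) + 3) * (m + 4)) := by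
  have h (x : ℝ) : x ^ m * (x ^ 2 * (1 - x)) = x ^ (m + 2) - x ^ (m + 3) := by ring
  simp only [h]
  rw [intervalIntegral.integral_sub (intervalIntegral.intervalIntegrable_pow _)
    (intervalIntegral.intervalIntegrable_pow _), integral_pow, integral_pow]
  push_cast
  field_simp
  ring

lemma M1_submatrix_succ_succ (n : ℕ) (ξ : ℝ) :
    (M1 (n + 1) ξ).submatrix Fin.succ Fin.succ =
      momentMatrix (fun x => x ^ 2 * (1 - x)) 0 1 n := by
  ext i j
  simp only [submatrix_apply, M1, momentMatrix, of_apply, Fin.val_succ,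
    integral_pow_mul_sq_mul_one_sub]
  rw [if_neg (by omega)]
  push_cast
  ring

lemma M1_succ_eq_add_single (n : ℕ) (r ξ : ℝ) :
    M1 (n + 1) ξ = M1 (n + 1) r + single 0 0 (ξ - r) := by
  ext i j
  simp only [M1, Matrix.add_apply, of_apply, single_apply, Fin.val_eq_zero_iff,
    eq_comm (a := (0 : Fin (n + 1)))]
  split_ifs <;> ring

theorem M1_det_eq_zero_iff {n : ℕ} {r : ℝ} (v : Fin (n + 1) → ℝ) (hv : v ≠ 0)
    (hr : M1 (n + 1) r *ᵥ v = 0) (ξ : ℝ) : (M1 (n + 1) ξ).det = 0 ↔ ξ = r := by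
  have hroot : (M1 (n + 1) r).det = 0 := exists_mulVec_eq_zero_iff.mp ⟨v, hv, hr⟩
  have hminor : ((M1 (n + 1) r).submatrix Fin.succ Fin.succ).det ≠ 0 := by
    rw [M1_submatrix_succ_succ]
    refine (momentMatrix_posDef zero_lt_one (by fun_prop) ?_ ?_ n).det_pos.ne'
    · exact fun x hx => mul_nonneg (sq_nonneg x) (sub_nonneg.mpr hx.2)
    · exact fun x hx => mul_pos (pow_pos hx.1 2) (sub_pos.mpr hx.2)
  rw [M1_succ_eq_add_single n r ξ, det_add_single_zero_zero, hroot, zero_add, mul_eq_zero,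
    sub_eq_zero]
  exact or_iff_left hminor

/-- The unique real root `ξ₀` of `det M₁(ξ₀) = 0` equals `1/3` for `n = 2`, `5/12` for
`n = 3`, `9/20` for `n = 4`, `7/15` for `n = 5`, `10/21` for `n = 6`, and `27/56`
for `n = 7`. -/
theorem stmt11 :
    (∀ ξ : ℝ, (M1 2 ξ).det = 0 ↔ ξ = 1 / 3) ∧
    (∀ ξ : ℝ, (M1 3 ξ).det = 0 ↔ ξ = 5 / 12) ∧
    (∀ ξ : ℝ, (M1 4 ξ).det = 0 ↔ ξ = 9 / 20) ∧
    (∀ ξ : ℝ, (M1 5 ξ).det = 0 ↔ ξ = 7 / 15) ∧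
    (∀ ξ : ℝ, (M1 6 ξ).det = 0 ↔ ξ = 10 / 21) ∧
    (∀ ξ : ℝ, (M1 7 ξ).det = 0 ↔ ξ = 27 / 56) := by
  -- kernel vectors of `M1 n ξ₀`: `v k = (-1)^k (n-1).choose k * (n+k+1).choose k / (k+1)`
  refine ⟨M1_det_eq_zero_iff ![1, -2] ?_ ?_, M1_det_eq_zero_iff ![1, -5, 5] ?_ ?_,
    M1_det_eq_zero_iff ![1, -9, 21, -14] ?_ ?_, M1_det_eq_zero_iff ![1, -14, 56, -84, 42] ?_ ?_,
    M1_det_eq_zero_iff ![1, -20, 120, -300, 330, -132] ?_ ?_,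
    M1_det_eq_zero_iff ![1, -27, 225, -825, 1485, -1287, 429] ?_ ?_⟩
  all_goals first
    | exact fun h => by simpa using congrFun h 0
    | ext i; fin_cases i <;> norm_num [M1, mulVec, dotProduct, Fin.sum_univ_succ]
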